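/- arXiv:1403.7364 — 3 statements merged into one kernel-verified Lean document; each statement's English description precedes it below -/
import Mathlib

section
/- Let (a_n) be a sequence of real numbers with a_n > -1 for all n. Then the series ∑ a_n² converges if and only if the series ∑ (a_n/(1+a_n))² converges. -/
/-!
The terms of a square-summable sequence tend to `0`, and near `0` both `x ↦ x / (1 + x)` and its
inverse `y ↦ y / (1 - y)` are `O(x)`. So each of the two series is dominated by the other.
-/

open Filter Topology Asymptotics

theorem Summable.tendsto_zero_of_sq {u : ℕ → ℝ} (h : Summable fun n => u n ^ 2) :
    Tendsto u atTop (𝓝 0) := by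
  have hsqrt := (Real.continuous_sqrt.tendsto 0).comp h.tendsto_atTop_zero
  rw [tendsto_zero_iff_abs_tendsto_zero]
  simpa [Function.comp_def, Real.sqrt_sq_eq_abs] using hsqrt

theorem isBigO_div_one_add_mul (c : ℝ) :
    (fun x : ℝ => x / (1 + c * x)) =O[𝓝 0] fun x => x := by
  have hinv : Tendsto (fun x : ℝ => (1 + c * x)⁻¹) (𝓝 0) (𝓝 1) := by
    have : ContinuousAt (fun x : ℝ => (1 + c * x)⁻¹) 0 := by fun_prop (disch := simp)
    simpa using this.tendsto
  simpa [div_eq_mul_inv] using (isBigO_refl (fun x : ℝ => x) (𝓝 0)).mul (hinv.isBigO_one ℝ)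

theorem Summable.sq_div_one_add_mul {u : ℕ → ℝ} (h : Summable fun n => u n ^ 2) (c : ℝ) :
    Summable fun n => (u n / (1 + c * u n)) ^ 2 :=
  summable_of_isBigO_nat h (((isBigO_div_one_add_mul c).comp_tendsto h.tendsto_zero_of_sq).pow 2)

theorem stmt_0 (a : ℕ → ℝ) (ha : ∀ n, a n > -1) :
    Summable (fun n => (a n) ^ 2) ↔ Summable (fun n => (a n / (1 + a n)) ^ 2) := by
  refine ⟨fun h => by simpa using h.sq_div_one_add_mul 1, fun h => ?_⟩
  have hinv (n : ℕ) : a n / (1 + a n) / (1 + -1 * (a n / (1 + a n))) = a n := by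
    have : 1 + a n ≠ 0 := by linarith [ha n]
    field_simp
    ring
  simpa only [hinv] using h.sq_div_one_add_mul (-1)
end

section
/- Let (a_n) be a sequence of real numbers with a_n > -1 for all n. Then ∑ a_n² < ∞ if and only if the infinite product ∏ (1+a_n)/(1+a_n/2)² converges to a strictly positive limit. -/
/-!
Writing each factor as `exp (-amgmGap (a n))`, the partial products are `exp` of minus the partial
sums of the nonnegative series `∑ amgmGap (a n)`, so they tend to a positive limit exactly when that
series converges. Near `0` the gap is comparable to `x ^ 2`, and either series converging forces
`a n → 0`, so the two series converge together.
-/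

open Filter Topology Real Finset

lemma exists_pos_tendsto_exp_neg_iff (s : ℕ → ℝ) :
    (∃ L, 0 < L ∧ Tendsto (fun N => exp (-s N)) atTop (𝓝 L)) ↔ ∃ S, Tendsto s atTop (𝓝 S) := by
  constructor
  · rintro ⟨L, hL, hlim⟩
    refine ⟨-log L, ?_⟩
    have hlog := ((continuousAt_log hL.ne').tendsto.comp hlim).neg
    simpa only [Function.comp_def, log_exp, neg_neg] using hlog
  · rintro ⟨S, hlim⟩
    exact ⟨exp (-S), exp_pos _, (continuous_exp.tendsto _).comp hlim.neg⟩

lemma summable_iff_exists_pos_tendsto_prod_exp_neg {g : ℕ → ℝ} (hg : ∀ n, 0 ≤ g n) :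
    Summable g ↔
      ∃ L, 0 < L ∧ Tendsto (fun N => ∏ n ∈ range N, exp (-g n)) atTop (𝓝 L) := by
  simp_rw [← exp_sum, sum_neg_distrib]
  rw [exists_pos_tendsto_exp_neg_iff]
  exact ⟨fun h => ⟨_, (hasSum_iff_tendsto_nat_of_nonneg hg _).1 h.hasSum⟩,
    fun ⟨_, h⟩ => ((hasSum_iff_tendsto_nat_of_nonneg hg _).2 h).summable⟩

/-- `(1 + x / 2) ^ 2 ≥ 1 + x` is AM–GM for `1` and `1 + x`; this is the logarithm of the ratio. -/
noncomputable def amgmGap (x : ℝ) : ℝ := log ((1 + x / 2) ^ 2 / (1 + x))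

lemma one_add_half_sq_div_one_add_pos {x : ℝ} (hx : -1 < x) : 0 < (1 + x / 2) ^ 2 / (1 + x) := by
  apply div_pos <;> nlinarith

lemma exp_neg_amgmGap {x : ℝ} (hx : -1 < x) : exp (-amgmGap x) = (1 + x) / (1 + x / 2) ^ 2 := by
  rw [amgmGap, ← log_inv, exp_log (inv_pos.2 (one_add_half_sq_div_one_add_pos hx)), inv_div]

lemma sq_div_add_two_sq_le_amgmGap {x : ℝ} (hx : -1 < x) : (x / (x + 2)) ^ 2 ≤ amgmGap x := by
  have hident : 1 - ((1 + x / 2) ^ 2 / (1 + x))⁻¹ = (x / (x + 2)) ^ 2 := by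
    have : x + 2 ≠ 0 := by linarith
    rw [show (1 + x / 2) ^ 2 = (x + 2) ^ 2 / 4 by ring, inv_div]
    field_simp
    ring
  exact hident ▸ one_sub_inv_le_log_of_pos (one_add_half_sq_div_one_add_pos hx)

lemma amgmGap_nonneg {x : ℝ} (hx : -1 < x) : 0 ≤ amgmGap x :=
  (sq_nonneg _).trans (sq_div_add_two_sq_le_amgmGap hx)

lemma amgmGap_le_sq_div_two {x : ℝ} (hx : -(1 / 2) ≤ x) : amgmGap x ≤ x ^ 2 / 2 := by
  have hident : (1 + x / 2) ^ 2 / (1 + x) = 1 + x ^ 2 / (4 * (1 + x)) := by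
    have : 1 + x ≠ 0 := by linarith
    field_simp
    ring
  calc amgmGap x ≤ (1 + x / 2) ^ 2 / (1 + x) - 1 :=
        log_le_sub_one_of_pos (one_add_half_sq_div_one_add_pos (by linarith))
    _ = x ^ 2 / (4 * (1 + x)) := by rw [hident]; ring
    _ ≤ x ^ 2 / 2 := div_le_div_of_nonneg_left (sq_nonneg x) (by norm_num) (by linarith)

lemma sq_le_nine_mul_amgmGap {x : ℝ} (hx : -1 < x) (hsmall : amgmGap x ≤ 1 / 9) :
    x ^ 2 ≤ 9 * amgmGap x := by
  -- `(x / (x + 2)) ^ 2 ≤ 1 / 9` forces `x ≤ 1`, i.e. `(x + 2) ^ 2 ≤ 9`.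
  have hlow := sq_div_add_two_sq_le_amgmGap hx
  have hx2 : 0 < x + 2 := by linarith
  have hsq : x ^ 2 = (x / (x + 2)) ^ 2 * (x + 2) ^ 2 := by field_simp
  have hle_one : x ≤ 1 := by
    have : 9 * x ^ 2 ≤ (x + 2) ^ 2 := by nlinarith
    nlinarith
  nlinarith [sq_nonneg (x / (x + 2))]

lemma summable_amgmGap_of_summable_sq {a : ℕ → ℝ} (ha : Summable fun n => a n ^ 2) :
    Summable fun n => amgmGap (a n) := by
  have hsmall : ∀ᶠ n in atTop, a n ^ 2 < 1 / 4 :=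
    ha.tendsto_atTop_zero.eventually (gt_mem_nhds (by norm_num))
  refine (ha.div_const 2).of_norm_bounded_eventually_nat ?_
  filter_upwards [hsmall] with n hn
  have hge : -(1 / 2) ≤ a n := by nlinarith
  rw [Real.norm_of_nonneg (amgmGap_nonneg (by linarith))]
  exact amgmGap_le_sq_div_two hge

lemma summable_sq_of_summable_amgmGap {a : ℕ → ℝ} (ha : ∀ n, -1 < a n)
    (hgap : Summable fun n => amgmGap (a n)) : Summable fun n => a n ^ 2 := by
  have hsmall : ∀ᶠ n in atTop, amgmGap (a n) < 1 / 9 :=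
    hgap.tendsto_atTop_zero.eventually (gt_mem_nhds (by norm_num))
  refine (hgap.mul_left 9).of_norm_bounded_eventually_nat ?_
  filter_upwards [hsmall] with n hn
  rw [Real.norm_of_nonneg (sq_nonneg _)]
  exact sq_le_nine_mul_amgmGap (ha n) hn.le

theorem stmt_1 (a : ℕ → ℝ) (ha : ∀ n, a n > -1) :
    Summable (fun n => (a n) ^ 2) ↔
      ∃ L : ℝ, 0 < L ∧
        Tendsto (fun N => ∏ n ∈ Finset.range N, (1 + a n) / (1 + a n / 2) ^ 2)
          atTop (nhds L) := by
  simp_rw [← exp_neg_amgmGap (ha _)]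
  rw [← summable_iff_exists_pos_tendsto_prod_exp_neg fun n => amgmGap_nonneg (ha n)]
  exact ⟨summable_amgmGap_of_summable_sq, summable_sq_of_summable_amgmGap ha⟩
end

section
/- Let d ≥ 1, 0 < α < 2∧d and β > α with 2α - β < α. Then sup over x, w in the unit ball B of ∫_B∫_B |x-y|^{α-d}·|z-w|^{α-d}·|y-z|^{β-2α} dz dy is finite. -/
/-!
On the unit ball `‖y - z‖ ≤ 2`, so `‖y - z‖ ^ (β - 2α) ≤ 2 ^ (β - 2α - γ) * ‖y - z‖ ^ γ` with
`γ = min (β - 2α) 0 ∈ (-α, 0]`. For nonpositive exponents `r ^ a * s ^ b ≤ r ^ (a + b) + s ^ (a + b)`,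
so the integral over `z` is at most two translates of `∫_{B(0,2)} ‖u‖ ^ (α - d + γ)`, which is finite
because `α - d + γ > -d`. The remaining integral over `y` of `‖x - y‖ ^ (α - d)` is bounded by
`∫_{B(0,2)} ‖u‖ ^ (α - d)` in the same way.
-/

open MeasureTheory Metric Module
open scoped ENNReal

namespace Real

theorem rpow_mul_rpow_le_rpow_add_rpow {r s a b : ℝ} (hr : 0 ≤ r) (hs : 0 ≤ s) (ha : a ≤ 0)
    (hb : b ≤ 0) : r ^ a * s ^ b ≤ r ^ (a + b) + s ^ (a + b) := by
  wlog hrs : r ≤ s generalizing r s a b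
  · rw [mul_comm, add_comm a b, add_comm (r ^ _)]
    exact this hs hr hb ha (le_of_not_ge hrs)
  rcases hr.eq_or_lt with rfl | hr
  · rcases ha.eq_or_lt with rfl | ha
    · simpa using rpow_nonneg le_rfl b
    · rw [zero_rpow ha.ne, zero_mul]
      positivity
  · calc r ^ a * s ^ b ≤ r ^ a * r ^ b :=
          mul_le_mul_of_nonneg_left (rpow_le_rpow_of_nonpos hr hrs hb) (rpow_nonneg hr.le a)
      _ = r ^ (a + b) := (rpow_add hr a b).symm
      _ ≤ r ^ (a + b) + s ^ (a + b) := le_add_of_nonneg_right (rpow_nonneg hs _)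

theorem rpow_le_rpow_mul_rpow_min {t R : ℝ} (ht : 0 ≤ t) (htR : t ≤ R) (c : ℝ) :
    t ^ c ≤ R ^ (c - min c 0) * t ^ min c 0 := by
  rcases le_total c 0 with hc | hc
  · simp [min_eq_left hc]
  · rw [min_eq_right hc, sub_zero, rpow_zero, mul_one]
    exact rpow_le_rpow ht htR hc

end Real

section

variable {G : Type*} [SeminormedAddCommGroup G] [MeasurableSpace G] [OpensMeasurableSpace G]
  [MeasurableAdd G] {μ : Measure G} [μ.IsAddRightInvariant]

theorem lintegral_ball_comp_sub_le (g : G → ℝ≥0∞) {p : G} {r : ℝ} (hp : ‖p‖ ≤ r) :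
    ∫⁻ y in ball 0 r, g (y - p) ∂μ ≤ ∫⁻ u in ball 0 (2 * r), g u ∂μ := by
  calc ∫⁻ y in ball 0 r, g (y - p) ∂μ
      ≤ ∫⁻ y in ball 0 r, (ball 0 (2 * r)).indicator g (y - p) ∂μ := by
        refine setLIntegral_mono' measurableSet_ball fun y hy => ?_
        rw [Set.indicator_of_mem]
        rw [mem_ball_zero_iff] at hy ⊢
        linarith [norm_sub_le y p]
    _ ≤ ∫⁻ y, (ball 0 (2 * r)).indicator g (y - p) ∂μ := setLIntegral_le_lintegral _ _
    _ = ∫⁻ u in ball 0 (2 * r), g u ∂μ := by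
        rw [lintegral_sub_right_eq_self, lintegral_indicator measurableSet_ball]

theorem lintegral_ball_norm_sub_rpow_mul_le_of_nonpos {a b r : ℝ} (ha : a ≤ 0) (hb : b ≤ 0)
    {w y : G} (hw : ‖w‖ ≤ r) (hy : ‖y‖ ≤ r) :
    ∫⁻ z in ball 0 r, ENNReal.ofReal (‖z - w‖ ^ a * ‖z - y‖ ^ b) ∂μ ≤
      2 * ∫⁻ u in ball 0 (2 * r), ENNReal.ofReal (‖u‖ ^ (a + b)) ∂μ := by
  set I := ∫⁻ u in ball 0 (2 * r), ENNReal.ofReal (‖u‖ ^ (a + b)) ∂μ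
  calc ∫⁻ z in ball 0 r, ENNReal.ofReal (‖z - w‖ ^ a * ‖z - y‖ ^ b) ∂μ
      ≤ ∫⁻ z in ball 0 r, (ENNReal.ofReal (‖z - w‖ ^ (a + b)) +
          ENNReal.ofReal (‖z - y‖ ^ (a + b))) ∂μ := by
        refine lintegral_mono fun z => ?_
        rw [← ENNReal.ofReal_add (by positivity) (by positivity)]
        exact ENNReal.ofReal_le_ofReal
          (Real.rpow_mul_rpow_le_rpow_add_rpow (norm_nonneg _) (norm_nonneg _) ha hb)
    _ = ∫⁻ z in ball 0 r, ENNReal.ofReal (‖z - w‖ ^ (a + b)) ∂μ +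
          ∫⁻ z in ball 0 r, ENNReal.ofReal (‖z - y‖ ^ (a + b)) ∂μ :=
        lintegral_add_left
          ((continuous_id.sub continuous_const).norm.measurable.pow_const _).ennreal_ofReal _
    _ ≤ I + I := add_le_add (lintegral_ball_comp_sub_le _ hw) (lintegral_ball_comp_sub_le _ hy)
    _ = 2 * I := (two_mul I).symm

theorem lintegral_ball_norm_sub_rpow_mul_le {a r : ℝ} (ha : a ≤ 0) (c : ℝ) {w y : G}
    (hw : ‖w‖ ≤ r) (hy : ‖y‖ ≤ r) :
    ∫⁻ z in ball 0 r, ENNReal.ofReal (‖z - w‖ ^ a * ‖y - z‖ ^ c) ∂μ ≤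
      ENNReal.ofReal ((2 * r) ^ (c - min c 0)) *
        (2 * ∫⁻ u in ball 0 (2 * r), ENNReal.ofReal (‖u‖ ^ (a + min c 0)) ∂μ) := by
  set K := ENNReal.ofReal ((2 * r) ^ (c - min c 0))
  calc ∫⁻ z in ball 0 r, ENNReal.ofReal (‖z - w‖ ^ a * ‖y - z‖ ^ c) ∂μ
      ≤ ∫⁻ z in ball 0 r, K * ENNReal.ofReal (‖z - w‖ ^ a * ‖z - y‖ ^ min c 0) ∂μ := by
        refine setLIntegral_mono' measurableSet_ball fun z hz => ?_
        rw [mem_ball_zero_iff] at hz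
        have hyz : ‖y - z‖ ≤ 2 * r := by linarith [norm_sub_le y z]
        rw [← ENNReal.ofReal_mul' (by positivity), norm_sub_rev z y]
        refine ENNReal.ofReal_le_ofReal ?_
        calc ‖z - w‖ ^ a * ‖y - z‖ ^ c
            ≤ ‖z - w‖ ^ a * ((2 * r) ^ (c - min c 0) * ‖y - z‖ ^ min c 0) := by
              gcongr
              exact Real.rpow_le_rpow_mul_rpow_min (norm_nonneg _) hyz c
          _ = _ := by ring
    _ = K * ∫⁻ z in ball 0 r, ENNReal.ofReal (‖z - w‖ ^ a * ‖z - y‖ ^ min c 0) ∂μ :=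
        lintegral_const_mul' _ _ ENNReal.ofReal_ne_top
    _ ≤ _ := by
        gcongr
        exact lintegral_ball_norm_sub_rpow_mul_le_of_nonpos ha (min_le_right c 0) hw hy

theorem lintegral_ball_lintegral_ball_norm_sub_rpow_le {a b r : ℝ} (hb : b ≤ 0) (c : ℝ)
    {x w : G} (hx : ‖x‖ ≤ r) (hw : ‖w‖ ≤ r) :
    ∫⁻ y in ball 0 r, ∫⁻ z in ball 0 r,
        ENNReal.ofReal (‖x - y‖ ^ a * ‖z - w‖ ^ b * ‖y - z‖ ^ c) ∂μ ∂μ ≤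
      ENNReal.ofReal ((2 * r) ^ (c - min c 0)) *
        (2 * ∫⁻ u in ball 0 (2 * r), ENNReal.ofReal (‖u‖ ^ (b + min c 0)) ∂μ) *
        ∫⁻ u in ball 0 (2 * r), ENNReal.ofReal (‖u‖ ^ a) ∂μ := by
  set C := ENNReal.ofReal ((2 * r) ^ (c - min c 0)) *
    (2 * ∫⁻ u in ball 0 (2 * r), ENNReal.ofReal (‖u‖ ^ (b + min c 0)) ∂μ)
  have inner (y : G) (hy : y ∈ ball 0 r) :
      ∫⁻ z in ball 0 r, ENNReal.ofReal (‖x - y‖ ^ a * ‖z - w‖ ^ b * ‖y - z‖ ^ c) ∂μ ≤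
        C * ENNReal.ofReal (‖y - x‖ ^ a) := by
    calc _ = ENNReal.ofReal (‖y - x‖ ^ a) *
            ∫⁻ z in ball 0 r, ENNReal.ofReal (‖z - w‖ ^ b * ‖y - z‖ ^ c) ∂μ := by
          rw [← lintegral_const_mul' _ _ ENNReal.ofReal_ne_top]
          refine lintegral_congr fun z => ?_
          rw [mul_assoc, ENNReal.ofReal_mul (by positivity), norm_sub_rev x y]
      _ ≤ ENNReal.ofReal (‖y - x‖ ^ a) * C := by
          gcongr
          exact lintegral_ball_norm_sub_rpow_mul_le hb c hw (mem_ball_zero_iff.1 hy).le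
      _ = C * ENNReal.ofReal (‖y - x‖ ^ a) := mul_comm _ _
  calc _ ≤ ∫⁻ y in ball 0 r, C * ENNReal.ofReal (‖y - x‖ ^ a) ∂μ :=
        setLIntegral_mono' measurableSet_ball inner
    _ = C * ∫⁻ y in ball 0 r, ENNReal.ofReal (‖y - x‖ ^ a) ∂μ :=
        lintegral_const_mul _
          ((continuous_id.sub continuous_const).norm.measurable.pow_const _).ennreal_ofReal
    _ ≤ _ := by
        gcongr C * ?_
        exact lintegral_ball_comp_sub_le _ hx

end

theorem lintegral_ball_norm_rpow_lt_top {E : Type*} [NormedAddCommGroup E] [NormedSpace ℝ E]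
    [FiniteDimensional ℝ E] [MeasurableSpace E] [BorelSpace E] (μ : Measure E)
    [μ.IsAddHaarMeasure] (hE : 1 ≤ finrank ℝ E) {e : ℝ} (he : -(finrank ℝ E : ℝ) < e) (r : ℝ) :
    ∫⁻ u in ball 0 r, ENNReal.ofReal (‖u‖ ^ e) ∂μ < ∞ := by
  refine IntegrableOn.setLIntegral_lt_top <|
    integrableOn_ball_of_norm_le_rpow hE (C := 1) (α := -e) (by linarith) ?_
      (measurable_norm.pow_const e).aestronglyMeasurable
  refine ae_of_all _ fun u => ?_
  rw [neg_neg, one_mul, Real.norm_of_nonneg (Real.rpow_nonneg (norm_nonneg u) e)]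

theorem stmt_13_general (d : ℕ) (α β : ℝ)
    (hα0 : 0 < α) (hαd : α < d) (hβ : α < β) :
    ∃ c : ℝ, 0 ≤ c ∧ ∀ x ∈ Metric.ball (0 : EuclideanSpace ℝ (Fin d)) 1,
      ∀ w ∈ Metric.ball (0 : EuclideanSpace ℝ (Fin d)) 1,
        (∫⁻ y in Metric.ball (0 : EuclideanSpace ℝ (Fin d)) 1,
          ∫⁻ z in Metric.ball (0 : EuclideanSpace ℝ (Fin d)) 1,
            ENNReal.ofReal (‖x - y‖ ^ (α - d) * ‖z - w‖ ^ (α - d) * ‖y - z‖ ^ (β - 2 * α))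
              ∂volume ∂volume)
          ≤ ENNReal.ofReal c := by
  set E := EuclideanSpace ℝ (Fin d)
  have hE : finrank ℝ E = d := finrank_euclideanSpace_fin
  have hd : 1 ≤ finrank ℝ E := by
    rw [hE]
    exact_mod_cast hα0.trans hαd
  set I : ℝ → ℝ≥0∞ := fun e => ∫⁻ u in ball (0 : E) (2 * 1), ENNReal.ofReal (‖u‖ ^ e)
  have hI (e : ℝ) (he : -(d : ℝ) < e) : I e ≠ ∞ :=
    (lintegral_ball_norm_rpow_lt_top volume hd (by rwa [hE]) _).ne
  set γ := min (β - 2 * α) 0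
  have hγ : -α < γ := lt_min (by linarith) (by linarith)
  have hIγ := hI (α - d + γ) (by linarith)
  have hIα := hI (α - d) (by linarith)
  refine ⟨(ENNReal.ofReal ((2 * 1) ^ (β - 2 * α - γ)) * (2 * I (α - d + γ)) * I (α - d)).toReal,
    ENNReal.toReal_nonneg, fun x hx w hw => ?_⟩
  rw [ENNReal.ofReal_toReal (by finiteness)]
  exact lintegral_ball_lintegral_ball_norm_sub_rpow_le (μ := volume) (by linarith) _
    (mem_ball_zero_iff.1 hx).le (mem_ball_zero_iff.1 hw).le

theorem stmt_13 (d : ℕ) (hd : 1 ≤ d) (α β : ℝ)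
    (hα0 : 0 < α) (hα2 : α < 2) (hαd : α < d) (hβ : α < β) :
    ∃ c : ℝ, 0 ≤ c ∧ ∀ x ∈ Metric.ball (0 : EuclideanSpace ℝ (Fin d)) 1,
      ∀ w ∈ Metric.ball (0 : EuclideanSpace ℝ (Fin d)) 1,
        (∫⁻ y in Metric.ball (0 : EuclideanSpace ℝ (Fin d)) 1,
          ∫⁻ z in Metric.ball (0 : EuclideanSpace ℝ (Fin d)) 1,
            ENNReal.ofReal (‖x - y‖ ^ (α - d) * ‖z - w‖ ^ (α - d) * ‖y - z‖ ^ (β - 2 * α))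
              ∂volume ∂volume)
          ≤ ENNReal.ofReal c :=
  stmt_13_general d α β hα0 hαd hβ
end
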